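/- arXiv:2007.04081 — 2 statements merged into one kernel-verified Lean document; each statement's English description precedes it below -/
import Mathlib

section
/- Fix a triangle Δ = abc in ℝ³ with a, b, c not collinear, and fix two distinct points p, q ∈ ℝ³. The locus γ_{pq} of all points r ∈ ℝ³ such that the triangle pqr is (directly) similar to Δ, with p, q, r corresponding to a, b, c respectively, is a circle whose axis (the line through its center perpendicular to its supporting plane) passes through p and q. -/
/-!
With `k = |pq| / |ab|`, the apex `r` of a triangle `pqr` similar to `abc` is exactly a point with
`|rp| = k |ca|` and `|rq| = k |bc|`, so the locus is the intersection of two spheres centred at `p`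
and `q`. The strict triangle inequalities of `abc`, scaled by `k`, make these spheres meet
transversally. Subtracting their equations leaves the linear equation of a plane orthogonal to
`q - p` (the radical plane), and within that plane the first sphere cuts out a circle whose centre
is the foot `o` of `p` on the plane; the radius is positive by Heron's formula.
-/

noncomputable section

abbrev E3 := EuclideanSpace ℝ (Fin 3)

/-- The locus of apices `r` such that triangle `pqr` is similar to the triangle `abc`,
with the correspondence `(p,q,r) ↔ (a,b,c)`: corresponding side lengths are proportional. -/
def simLocus (a b c p q : E3) : Set E3 :=
  {r | dist p q / dist a b = dist q r / dist b c ∧ dist p q / dist a b = dist r p / dist c a}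

open RealInnerProductSpace

theorem dist_lt_dist_add_dist_of_not_collinear {W P : Type*} [NormedAddCommGroup W]
    [NormedSpace ℝ W] [StrictConvexSpace ℝ W] [MetricSpace P] [NormedAddTorsor W P] {x y z : P}
    (h : ¬ Collinear ℝ ({x, y, z} : Set P)) : dist x z < dist x y + dist y z :=
  dist_lt_dist_add_dist_iff.2 fun hw => h hw.collinear

section TwoSpheres

variable {V : Type*} [NormedAddCommGroup V] [InnerProductSpace ℝ V]

theorem dist_add_smul_sq (r p v : V) (s t : ℝ) :
    dist r (p + s • v) ^ 2 = ‖r - (p + t • v)‖ ^ 2 - 2 * (s - t) * ⟪r - (p + t • v), v⟫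
      + (s - t) ^ 2 * ‖v‖ ^ 2 := by
  have hsplit : r - (p + s • v) = r - (p + t • v) - (s - t) • v := by
    rw [sub_smul]; abel
  rw [dist_eq_norm, hsplit, norm_sub_sq_real, real_inner_smul_right, norm_smul, mul_pow,
    Real.norm_eq_abs, sq_abs]
  ring

/-- `(2 d R₁)² - (d² + R₁² - R₂²)²` is sixteen times the squared area of the triangle with sides
`d, R₁, R₂` (Heron). -/
theorem sq_add_sq_sub_sq_sq_lt {d R₁ R₂ : ℝ}
    (h₁ : R₁ < R₂ + d) (h₂ : R₂ < R₁ + d) (h₃ : d < R₁ + R₂) :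
    (d ^ 2 + R₁ ^ 2 - R₂ ^ 2) ^ 2 < (2 * d * R₁) ^ 2 := by
  have heron : (2 * d * R₁) ^ 2 - (d ^ 2 + R₁ ^ 2 - R₂ ^ 2) ^ 2 =
      (R₁ + R₂ - d) * (R₂ + d - R₁) * (d + R₁ - R₂) * (d + R₁ + R₂) := by ring
  rw [← sub_pos, heron]
  exact mul_pos (mul_pos (mul_pos (by linarith) (by linarith)) (by linarith)) (by linarith)

theorem inter_spheres_eq_circle {p q : V} {R₁ R₂ : ℝ}
    (h₁ : R₁ < R₂ + dist p q) (h₂ : R₂ < R₁ + dist p q) (h₃ : dist p q < R₁ + R₂) :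
    ∃ ρ t : ℝ, 0 < ρ ∧ {r | dist r p = R₁ ∧ dist r q = R₂} =
      {r | dist r (p + t • (q - p)) = ρ ∧ ⟪r - (p + t • (q - p)), q - p⟫ = 0} := by
  set d := dist p q
  have hd : 0 < d := by linarith
  have hR₁ : 0 < R₁ := by linarith
  have hR₂ : 0 < R₂ := by linarith
  have hv : ‖q - p‖ ^ 2 = d ^ 2 := by rw [← dist_eq_norm, dist_comm]
  set t := (d ^ 2 + R₁ ^ 2 - R₂ ^ 2) / (2 * d ^ 2) with ht
  have htd : (2 * t - 1) * d ^ 2 = R₁ ^ 2 - R₂ ^ 2 := by rw [ht]; field_simp; ring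
  have hρ : 0 < R₁ ^ 2 - t ^ 2 * d ^ 2 := by
    have hcos := sq_add_sq_sub_sq_sq_lt h₁ h₂ h₃
    have key : (R₁ ^ 2 - t ^ 2 * d ^ 2) * (2 * d) ^ 2 =
        (2 * d * R₁) ^ 2 - (d ^ 2 + R₁ ^ 2 - R₂ ^ 2) ^ 2 := by rw [ht]; field_simp
    nlinarith
  refine ⟨√(R₁ ^ 2 - t ^ 2 * d ^ 2), t, Real.sqrt_pos.2 hρ, ?_⟩
  ext r
  have hp := dist_add_smul_sq r p (q - p) 0 t
  have hq := dist_add_smul_sq r p (q - p) 1 t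
  rw [zero_smul, add_zero] at hp
  rw [one_smul, add_sub_cancel] at hq
  rw [Set.mem_ofPred_eq, Set.mem_ofPred_eq, ← sq_eq_sq₀ dist_nonneg hR₁.le,
    ← sq_eq_sq₀ dist_nonneg hR₂.le, ← sq_eq_sq₀ dist_nonneg (Real.sqrt_nonneg _),
    Real.sq_sqrt hρ.le, hp, hq, hv, dist_eq_norm]
  constructor
  · rintro ⟨hp', hq'⟩
    have horth : ⟪r - (p + t • (q - p)), q - p⟫ = 0 := by linear_combination (hp' - hq' - htd) / 2
    exact ⟨by linear_combination hp' - 2 * t * horth, horth⟩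
  · rintro ⟨hn, horth⟩
    constructor
    · linear_combination hn + 2 * t * horth
    · linear_combination hn - 2 * (1 - t) * horth - htd

end TwoSpheres

theorem simLocus_eq_inter_spheres {a b c : E3} (p q : E3) (hbc : b ≠ c) (hca : c ≠ a) :
    simLocus a b c p q = {r | dist r p = dist p q / dist a b * dist c a ∧
      dist r q = dist p q / dist a b * dist b c} := by
  ext r
  simp only [simLocus, Set.mem_ofPred_eq, eq_div_iff (dist_ne_zero.2 hbc),
    eq_div_iff (dist_ne_zero.2 hca), dist_comm q r]
  tauto

/-- For a nondegenerate triangle `abc` and distinct points `p ≠ q`, the locus of points `r`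
with triangle `pqr` similar to `abc` is a circle whose axis (the line through its center
orthogonal to its supporting plane) passes through `p` and `q`: there are a center `o` on
the line through `p` and `q` and a radius `ρ > 0` such that the locus is the circle of
radius `ρ` about `o` in the plane through `o` orthogonal to `q - p`. -/
theorem simLocus_is_circle_with_axis_pq (a b c p q : E3)
    (hΔ : ¬ Collinear ℝ ({a, b, c} : Set E3)) (hpq : p ≠ q) :
    ∃ (o : E3) (ρ t : ℝ), 0 < ρ ∧ o = p + t • (q - p) ∧
      simLocus a b c p q = {r | dist r o = ρ ∧ (inner ℝ (r - o) (q - p) : ℝ) = 0} := by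
  set k := dist p q / dist a b
  have hk : 0 < k := div_pos (dist_pos.2 hpq) (dist_pos.2 (ne₁₂_of_not_collinear hΔ))
  have hd : dist p q = k * dist a b :=
    (div_mul_cancel₀ _ (dist_ne_zero.2 (ne₁₂_of_not_collinear hΔ))).symm
  have hcba := dist_lt_dist_add_dist_of_not_collinear (x := c) (y := b) (z := a)
    (by rwa [Set.insert_comm, Set.pair_comm, Set.insert_comm])
  have hbac := dist_lt_dist_add_dist_of_not_collinear (x := b) (y := a) (z := c)
    (by rwa [Set.insert_comm])
  have hacb := dist_lt_dist_add_dist_of_not_collinear (x := a) (y := c) (z := b)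
    (by rwa [Set.pair_comm])
  obtain ⟨ρ, t, hρ, hcircle⟩ := inter_spheres_eq_circle (p := p) (q := q)
    (R₁ := k * dist c a) (R₂ := k * dist b c)
    (by rw [hd, ← mul_add]; gcongr; simpa only [dist_comm] using hcba)
    (by rw [hd, ← mul_add]; gcongr; simpa only [dist_comm, add_comm] using hbac)
    (by rw [hd, ← mul_add]; gcongr; simpa only [dist_comm, add_comm] using hacb)
  exact ⟨_, ρ, t, hρ, rfl, (simLocus_eq_inter_spheres p q (ne₂₃_of_not_collinear hΔ)
    (ne₁₃_of_not_collinear hΔ).symm).trans hcircle⟩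
end
end

section
/- Let Δ be a fixed nondegenerate triangle, let σ be a fixed sphere in ℝ³ with center o, and let p ∈ ℝ³ with p ≠ o. There are at most two circles γ contained in σ that arise as γ_{pq} for some point q, where γ_{pq} is the circle of points r making triangle pqr similar to Δ with correspondence (p,q,r) ↔ (a,b,c). -/
noncomputable section

/-! By the law of cosines, `γ_{pq}` contains the circle of points
`p + (|ca| / |ab|) • (cos A • (q - p) + sin A • w)` with `w ⊥ q - p`, `‖w‖ = ‖q - p‖` and
`A = ∠bac`. This circle is invariant under `w ↦ -w`; if it lies on the sphere about `o`, comparing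
the two distances to `o` shows `o - p ⊥ w` for all such `w`, so `o - p` is a multiple of `q - p`:
the axis passes through the centre. Writing `q = p + t • (o - p)`, the radius `R` of the sphere
then satisfies `R² = ‖o - p‖² ((|ca|/|ab|)² t² - 2 (|ca|/|ab|) cos A · t + 1)`, a quadratic
equation in `t` with nonzero leading coefficient, and `t` determines the circle. -/

open EuclideanGeometry Metric Real
open scoped RealInnerProductSpace

theorem encard_setOf_quadratic_eq_zero_le_two {K : Type*} [Field K] {A B C : K} (hA : A ≠ 0) :
    {x : K | A * x ^ 2 + B * x + C = 0}.encard ≤ 2 := by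
  obtain h | ⟨x₀, hx₀ : A * x₀ ^ 2 + B * x₀ + C = 0⟩ :=
    Set.eq_empty_or_nonempty {x : K | A * x ^ 2 + B * x + C = 0}
  · simp [h]
  have hsub : {x : K | A * x ^ 2 + B * x + C = 0} ⊆ {x₀, -B / A - x₀} := by
    rintro x (hx : A * x ^ 2 + B * x + C = 0)
    have hfac : (x - x₀) * (A * (x + x₀) + B) = 0 := by linear_combination hx - hx₀
    rcases mul_eq_zero.mp hfac with h | h
    · exact .inl (sub_eq_zero.mp h)
    · refine .inr (Set.mem_singleton_iff.mpr ?_)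
      rw [eq_sub_iff_add_eq, eq_div_iff hA]
      linear_combination h
  calc _ ≤ ({x₀, -B / A - x₀} : Set K).encard := Set.encard_le_encard hsub
    _ ≤ 2 := (Set.encard_insert_le _ _).trans (by rw [Set.encard_singleton]; rfl)

section InnerProductSpace

variable {V : Type*} [NormedAddCommGroup V] [InnerProductSpace ℝ V]

theorem exists_inner_eq_zero_and_norm_eq [FiniteDimensional ℝ V]
    (hV : 1 < Module.finrank ℝ V) {u : V} (hu : u ≠ 0) {r : ℝ} (hr : 0 ≤ r) :
    ∃ w, ⟪u, w⟫ = 0 ∧ ‖w‖ = r := by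
  have : Nontrivial (ℝ ∙ u)ᗮ := by
    apply Module.nontrivial_of_finrank_pos (R := ℝ)
    have := (ℝ ∙ u).finrank_add_finrank_orthogonal
    rw [finrank_span_singleton hu] at this
    omega
  obtain ⟨w, hw⟩ := exists_norm_eq (ℝ ∙ u)ᗮ hr
  exact ⟨w, Submodule.mem_orthogonal_singleton_iff_inner_right.mp w.2, hw⟩

theorem mem_span_singleton_of_forall_inner_eq_zero {u x : V} (hu : u ≠ 0)
    (h : ∀ w, ⟪u, w⟫ = 0 → ‖w‖ = ‖u‖ → ⟪x, w⟫ = 0) : x ∈ ℝ ∙ u := by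
  rw [← Submodule.orthogonal_orthogonal (ℝ ∙ u), Submodule.mem_orthogonal']
  intro w hw
  rw [Submodule.mem_orthogonal_singleton_iff_inner_right] at hw
  rcases eq_or_ne w 0 with rfl | hw0
  · exact inner_zero_right _
  have hw' : ‖w‖ ≠ 0 := norm_ne_zero_iff.mpr hw0
  have := h ((‖u‖ / ‖w‖) • w) (by rw [inner_smul_right, hw, mul_zero])
    (by rw [norm_smul, norm_div, norm_norm, norm_norm, div_mul_cancel₀ _ hw'])
  rw [inner_smul_right] at this
  exact (mul_eq_zero.mp this).resolve_left (div_ne_zero (norm_ne_zero_iff.mpr hu) hw')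

theorem norm_cos_smul_add_sin_smul {u w : V} (hw : ⟪u, w⟫ = 0) (hwn : ‖w‖ = ‖u‖) (θ : ℝ) :
    ‖cos θ • u + sin θ • w‖ = ‖u‖ := by
  have hsq : ‖cos θ • u + sin θ • w‖ ^ 2 = ‖u‖ ^ 2 := by
    rw [norm_add_sq_real, inner_smul_left, inner_smul_right, hw, norm_smul, norm_smul, hwn]
    simp only [Real.norm_eq_abs, mul_pow, sq_abs]
    linear_combination ‖u‖ ^ 2 * sin_sq_add_cos_sq θ
  exact (sq_eq_sq₀ (norm_nonneg _) (norm_nonneg _)).mp hsq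

/-- The circle cut out of the cone with apex `p`, axis `u` and half-angle `θ` by the sphere
of radius `k * ‖u‖` about `p`. -/
def coneCircle (p u : V) (k θ : ℝ) : Set V :=
  {r | ∃ w, ⟪u, w⟫ = 0 ∧ ‖w‖ = ‖u‖ ∧ r = p + k • (cos θ • u + sin θ • w)}

theorem inner_eq_zero_of_coneCircle_subset_sphere {p u o w : V} {k θ R : ℝ}
    (hkθ : k * sin θ ≠ 0) (h : coneCircle p u k θ ⊆ sphere o R)
    (hw : ⟪u, w⟫ = 0) (hwn : ‖w‖ = ‖u‖) : ⟪o - p, w⟫ = 0 := by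
  set y := (k * cos θ) • u - (o - p)
  have hmem : ∀ w', ⟪u, w'⟫ = 0 → ‖w'‖ = ‖u‖ → ‖y + (k * sin θ) • w'‖ = R := by
    intro w' hw' hwn'
    have := h ⟨w', hw', hwn', rfl⟩
    rw [mem_sphere_iff_norm] at this
    rw [← this]
    congr 1
    simp only [y, smul_add, smul_smul]
    abel
  have hplus := hmem w hw hwn
  have hminus := hmem (-w) (by rw [inner_neg_right, hw, neg_zero]) (by rw [norm_neg, hwn])
  rw [smul_neg, ← sub_eq_add_neg] at hminus
  have hsq : ‖y + (k * sin θ) • w‖ ^ 2 = ‖y - (k * sin θ) • w‖ ^ 2 := by rw [hplus, hminus]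
  rw [norm_add_sq_real y, norm_sub_sq_real y, inner_smul_right] at hsq
  have hyw : ⟪y, w⟫ = 0 :=
    (mul_eq_zero.mp (by linarith : k * sin θ * ⟪y, w⟫ = 0)).resolve_left hkθ
  have hy : ⟪y, w⟫ = -⟪o - p, w⟫ := by
    simp only [y, inner_sub_left, inner_smul_left, hw, mul_zero, zero_sub]
  linarith

theorem sub_mem_span_singleton_of_coneCircle_subset_sphere {p u o : V} {k θ R : ℝ}
    (hu : u ≠ 0) (hkθ : k * sin θ ≠ 0) (h : coneCircle p u k θ ⊆ sphere o R) :
    o - p ∈ ℝ ∙ u :=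
  mem_span_singleton_of_forall_inner_eq_zero hu fun _ hw hwn ↦
    inner_eq_zero_of_coneCircle_subset_sphere hkθ h hw hwn

theorem dist_sq_of_mem_coneCircle {p o r : V} {k θ t : ℝ}
    (hr : r ∈ coneCircle p (t • (o - p)) k θ) :
    dist r o ^ 2 = ‖o - p‖ ^ 2 * (k ^ 2 * t ^ 2 - 2 * k * cos θ * t + 1) := by
  obtain ⟨w, hw, hwn, rfl⟩ := hr
  have hw' : ⟪o - p, w⟫ = 0 := by
    rcases eq_or_ne t 0 with rfl | ht
    · rw [zero_smul, norm_zero, norm_eq_zero] at hwn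
      rw [hwn, inner_zero_right]
    · rw [real_inner_smul_left] at hw
      exact (mul_eq_zero.mp hw).resolve_left ht
  set v := cos θ • (t • (o - p)) + sin θ • w
  have hv : ‖v‖ = |t| * ‖o - p‖ := by
    rw [norm_cos_smul_add_sin_smul hw hwn, norm_smul, Real.norm_eq_abs]
  have hvo : ⟪v, o - p⟫ = cos θ * t * ‖o - p‖ ^ 2 := by
    rw [inner_add_left, real_inner_smul_left, real_inner_smul_left, real_inner_smul_left,
      real_inner_comm (o - p) w, hw', real_inner_self_eq_norm_sq]
    ring
  rw [dist_eq_norm, show p + k • v - o = k • v - (o - p) by abel, norm_sub_sq_real,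
    norm_smul, real_inner_smul_left, hv, hvo, Real.norm_eq_abs]
  simp only [mul_pow, sq_abs]
  ring

end InnerProductSpace

section Triangle

variable {a b c : E3}

theorem coneCircle_subset_simLocus (hab : a ≠ b) (hbc : b ≠ c) (hca : c ≠ a) (p q : E3) :
    coneCircle p (q - p) (dist c a / dist a b) (∠ b a c) ⊆ simLocus a b c p q := by
  rintro r ⟨w, hw, hwn, rfl⟩
  have hab' := dist_pos.mpr hab
  have hbc' := dist_pos.mpr hbc
  have hca' := dist_pos.mpr hca
  set k := dist c a / dist a b
  set v := cos (∠ b a c) • (q - p) + sin (∠ b a c) • w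
  have hv : ‖v‖ = dist p q := by
    rw [norm_cos_smul_add_sin_smul hw hwn, dist_comm, dist_eq_norm]
  have huv : ⟪q - p, v⟫ = cos (∠ b a c) * dist p q ^ 2 := by
    simp only [v, inner_add_right, real_inner_smul_right, hw, real_inner_self_eq_norm_sq]
    rw [dist_comm, dist_eq_norm]
    ring
  have hrp : dist (p + k • v) p = k * dist p q := by
    rw [dist_eq_norm, add_sub_cancel_left, norm_smul, Real.norm_of_nonneg (by positivity), hv]
  have hqr : dist q (p + k • v) = dist b c / dist a b * dist p q := by
    rw [dist_eq_norm, ← sq_eq_sq₀ (norm_nonneg _) (by positivity),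
      show q - (p + k • v) = (q - p) - k • v by abel, norm_sub_sq_real, real_inner_smul_right,
      huv, norm_smul, hv, ← dist_eq_norm, dist_comm q p, Real.norm_of_nonneg (by positivity)]
    have hcos := law_cos b a c
    rw [dist_comm b a] at hcos
    simp only [k]
    field_simp
    linear_combination (-dist p q ^ 2) * hcos
  constructor
  · rw [hqr]
    field_simp
  · rw [hrp]
    simp only [k]
    field_simp

theorem dist_div_dist_ne_zero_of_not_collinear (hΔ : ¬ Collinear ℝ ({a, b, c} : Set E3)) :
    dist c a / dist a b ≠ 0 :=
  div_ne_zero (dist_ne_zero.mpr (ne₁₃_of_not_collinear hΔ).symm)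
    (dist_ne_zero.mpr (ne₁₂_of_not_collinear hΔ))

theorem exists_eq_add_smul_of_simLocus_subset_sphere (hΔ : ¬ Collinear ℝ ({a, b, c} : Set E3))
    {o p q : E3} {R : ℝ} (hp : p ≠ o) (hq : q ≠ p) (h : simLocus a b c p q ⊆ sphere o R) :
    ∃ t : ℝ, q = p + t • (o - p) ∧
      ‖o - p‖ ^ 2 * ((dist c a / dist a b) ^ 2 * t ^ 2
        - 2 * (dist c a / dist a b) * cos (∠ b a c) * t + 1) = R ^ 2 := by
  have hcone := (coneCircle_subset_simLocus (ne₁₂_of_not_collinear hΔ)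
    (ne₂₃_of_not_collinear hΔ) (ne₁₃_of_not_collinear hΔ).symm p q).trans h
  have hkθ : dist c a / dist a b * sin (∠ b a c) ≠ 0 :=
    mul_ne_zero (dist_div_dist_ne_zero_of_not_collinear hΔ)
      (sin_ne_zero_of_not_collinear (by rwa [Set.insert_comm]))
  obtain ⟨m, hm⟩ := Submodule.mem_span_singleton.mp
    (sub_mem_span_singleton_of_coneCircle_subset_sphere (sub_ne_zero.mpr hq) hkθ hcone)
  have hm0 : m ≠ 0 := by
    rintro rfl
    exact hp (sub_eq_zero.mp (by rw [← hm, zero_smul])).symm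
  have hqt : q - p = m⁻¹ • (o - p) := by rw [← hm, smul_smul, inv_mul_cancel₀ hm0, one_smul]
  refine ⟨m⁻¹, by rw [← hqt]; abel, ?_⟩
  rw [hqt] at hcone
  obtain ⟨w, hw, hwn⟩ := exists_inner_eq_zero_and_norm_eq
    (by rw [finrank_euclideanSpace_fin]; norm_num) (hqt ▸ sub_ne_zero.mpr hq)
    (norm_nonneg (m⁻¹ • (o - p)))
  have hr : p + (dist c a / dist a b) • (cos (∠ b a c) • (m⁻¹ • (o - p)) + sin (∠ b a c) • w) ∈
      coneCircle p (m⁻¹ • (o - p)) (dist c a / dist a b) (∠ b a c) := ⟨w, hw, hwn, rfl⟩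
  have h1 : dist _ o = R := hcone hr
  rw [← h1, dist_sq_of_mem_coneCircle (o := o) (t := m⁻¹) hr]

end Triangle

theorem at_most_two_cospherical_simLoci_general (a b c : E3)
    (hΔ : ¬ Collinear ℝ ({a, b, c} : Set E3)) (o : E3) (R : ℝ)
    (p : E3) (hp : p ≠ o) :
    Set.encard
      {γ : Set E3 | ∃ q : E3, q ≠ p ∧ γ = simLocus a b c p q ∧
        γ ⊆ Metric.sphere o R} ≤ 2 := by
  set k := dist c a / dist a b
  set D := ‖o - p‖
  have hA : D ^ 2 * k ^ 2 ≠ 0 := mul_ne_zero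
    (pow_ne_zero 2 (norm_ne_zero_iff.mpr (sub_ne_zero.mpr hp.symm)))
    (pow_ne_zero 2 (dist_div_dist_ne_zero_of_not_collinear hΔ))
  calc _ ≤ ((fun t : ℝ ↦ simLocus a b c p (p + t • (o - p))) ''
        {t | D ^ 2 * k ^ 2 * t ^ 2 + (-2 * D ^ 2 * k * cos (∠ b a c)) * t
          + (D ^ 2 - R ^ 2) = 0}).encard := by
        refine Set.encard_le_encard ?_
        rintro γ ⟨q, hq, rfl, hγ⟩
        obtain ⟨t, rfl, ht⟩ := exists_eq_add_smul_of_simLocus_subset_sphere hΔ hp hq hγ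
        refine ⟨t, ?_, rfl⟩
        show _ = 0
        linear_combination ht
    _ ≤ _ := Set.encard_image_le _ _
    _ ≤ 2 := encard_setOf_quadratic_eq_zero_le_two hA

/-- For a fixed nondegenerate triangle `abc`, a fixed sphere `σ` with center `o` and
radius `R > 0`, and a fixed point `p ≠ o`, there are at most two circles contained in
`σ` that arise as the similarity locus `γ_{pq}` for some point `q`. -/
theorem at_most_two_cospherical_simLoci (a b c : E3)
    (hΔ : ¬ Collinear ℝ ({a, b, c} : Set E3)) (o : E3) (R : ℝ) (hR : 0 < R)
    (p : E3) (hp : p ≠ o) :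
    Set.encard
      {γ : Set E3 | ∃ q : E3, q ≠ p ∧ γ = simLocus a b c p q ∧
        γ ⊆ Metric.sphere o R} ≤ 2 :=
  at_most_two_cospherical_simLoci_general a b c hΔ o R p hp
end
end
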